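/- For n ≥ 3 and 2 ≤ k ≤ n−1, an oriented cycle C⃗_n is {k}-antimagic if and only if it is unidirectional. -/

import Mathlib

open scoped Classical

/-- There is a directed walk of length `k` from `u` to `v` in the digraph with arc relation `A`. -/
def WalkLen {V : Type*} (A : V → V → Prop) : ℕ → V → V → Prop
  | 0, u, v => u = v
  | k + 1, u, v => ∃ w, A u w ∧ WalkLen A k w v

/-- The directed distance from `u` to `v` is exactly `k`
(i.e. `k` is the length of a shortest directed path from `u` to `v`). -/
def HasDist {V : Type*} (A : V → V → Prop) (u v : V) (k : ℕ) : Prop :=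
  WalkLen A k u v ∧ ∀ m < k, ¬ WalkLen A m u v

/-- `y` belongs to the `D`-neighborhood of `v`: the distance from `v` to `y` lies in `D`. -/
def InDNbhd {V : Type*} (A : V → V → Prop) (D : Set ℕ) (v y : V) : Prop :=
  ∃ k ∈ D, HasDist A v y k

/-- The `D`-weight of `v` under the labeling `f`: the sum of labels of the `D`-neighbors. -/
noncomputable def dWeight {V : Type*} [Fintype V] (A : V → V → Prop) (D : Set ℕ)
    (f : V → ℕ) (v : V) : ℕ :=
  ∑ y : V, if InDNbhd A D v y then f y else 0

/-- The digraph `(V, A)` is `D`-antimagic: some bijective labeling of the vertices by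
`1, …, |V|` gives pairwise distinct `D`-weights. -/
def DAntimagic (V : Type*) [Fintype V] (A : V → V → Prop) (D : Set ℕ) : Prop :=
  ∃ f : V ≃ Fin (Fintype.card V),
    Function.Injective fun v => dWeight A D (fun y => (f y : ℕ) + 1) v

/-- The orientation of the cycle `C_n` determined by `σ`: the edge between vertex `i` and
vertex `(i+1) mod n` is directed `i → i+1` when `σ i = true`, and `i+1 → i` otherwise. -/
def cycleArc (n : ℕ) (σ : Fin n → Bool) (u v : Fin n) : Prop :=
  (σ u = true ∧ (v : ℕ) = ((u : ℕ) + 1) % n) ∨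
  (σ v = false ∧ (u : ℕ) = ((v : ℕ) + 1) % n)

/-- The arc relation of the unidirectional oriented cycle `C⃗_n`: arcs `i → (i+1) mod n`. -/
def uniArc (n : ℕ) (u v : Fin n) : Prop :=
  (v : ℕ) = ((u : ℕ) + 1) % n

/-- An orientation of `C_n` is unidirectional if all edges are directed the same way around. -/
def Unidirectional (n : ℕ) (σ : Fin n → Bool) : Prop :=
  (∀ i, σ i = true) ∨ (∀ i, σ i = false)

/-- A sink: a vertex of out-degree 0. -/
def IsSink {V : Type*} (A : V → V → Prop) (u : V) : Prop :=
  ∀ v, ¬ A u v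

/-- A source: a vertex of in-degree 0. -/
def IsSource {V : Type*} (A : V → V → Prop) (u : V) : Prop :=
  ∀ v, ¬ A v u

/-- A digraph is Θ-oriented if it has exactly one sink and exactly one source, and
they are adjacent (so the arc between them goes from the source to the sink). -/
def ThetaOriented {V : Type*} (A : V → V → Prop) : Prop :=
  ∃ s t, IsSink A s ∧ IsSource A t ∧ (∀ u, IsSink A u → u = s) ∧
    (∀ u, IsSource A u → u = t) ∧ A t s

/-- The arc relation of the Θ-oriented cycle on `Fin n`:
arcs `i → i+1` for `0 ≤ i ≤ n-2`, together with the arc `0 → n-1`. -/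
def thetaArc (n : ℕ) (u v : Fin n) : Prop :=
  ((v : ℕ) = (u : ℕ) + 1) ∨ ((u : ℕ) = 0 ∧ (v : ℕ) = n - 1)

/-- The arc relation of a disjoint union of `c` oriented cycles, the `j`-th component having
`len j` vertices and arc relation `A j`. -/
def unionArc (c : ℕ) (len : Fin c → ℕ)
    (A : ∀ j, Fin (len j) → Fin (len j) → Prop)
    (u v : Σ j, Fin (len j)) : Prop :=
  ∃ h : u.1 = v.1, A v.1 (Fin.cast (congrArg len h) u.2) v.2

open scoped Fin.CommRing

section AntimagicAux
variable {n : ℕ} [NeZero n] {σ : Fin n → Bool}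

lemma succ_iff (hn : 2 ≤ n) (u v : Fin n) : (v:ℕ) = ((u:ℕ)+1) % n ↔ v = u + 1 := by
  rw [Fin.ext_iff, Fin.val_add, Fin.val_one', Nat.mod_eq_of_lt (show 1 < n by omega)]

lemma arc_iff (hn : 2 ≤ n) (u v : Fin n) :
    cycleArc n σ u v ↔ (σ u = true ∧ v = u + 1) ∨ (σ v = false ∧ u = v + 1) := by
  unfold cycleArc
  rw [succ_iff hn, succ_iff hn]

lemma sink_iff (hn : 2 ≤ n) (u : Fin n) :
    IsSink (cycleArc n σ) u ↔ σ u = false ∧ σ (u - 1) = true := by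
  constructor
  · intro h
    constructor
    · by_contra hs
      exact h (u+1) ((arc_iff hn u (u+1)).2 (Or.inl ⟨by simpa using hs, rfl⟩))
    · by_contra hs
      exact h (u-1) ((arc_iff hn u (u-1)).2 (Or.inr ⟨by simpa using hs, by ring⟩))
  · rintro ⟨h1, h2⟩ v hv
    rcases (arc_iff hn u v).1 hv with ⟨ha, _⟩ | ⟨ha, hb⟩
    · simp [h1] at ha
    · have : v = u - 1 := by rw [hb]; ring
      rw [this, h2] at ha
      simp at ha

lemma weight_zero {V : Type*} [Fintype V] (A : V → V → Prop) {k : ℕ} (hk : 2 ≤ k) (u : V)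
    (h : ∀ w, A u w → IsSink A w) (f : V → ℕ) : dWeight A {k} f u = 0 := by
  unfold dWeight
  refine Finset.sum_eq_zero fun y _ => ?_
  rw [if_neg]
  rintro ⟨k', hk', hd⟩
  rw [Set.mem_singleton_iff] at hk'
  obtain ⟨m, rfl⟩ : ∃ m, k' = m + 2 := ⟨k' - 2, by omega⟩
  obtain ⟨w, hw, w', hw', -⟩ := hd.1
  exact h w hw w' hw'

lemma find_sink {b : Fin n} (hb : σ b = false) {w : ℕ} (hw : σ (b - (w : Fin n)) = true) :
    ∃ j : ℕ, j < w ∧ (∀ i ≤ j, σ (b - ((i : ℕ) : Fin n)) = false) ∧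
      σ (b - (((j+1 : ℕ)) : Fin n)) = true := by
  have hex : ∃ i : ℕ, σ (b - (i : Fin n)) = true := ⟨w, hw⟩
  have hcw : Nat.find hex ≤ w := Nat.find_le hw
  have hc0 : Nat.find hex ≠ 0 := by
    intro h0
    have hcP := Nat.find_spec hex
    rw [h0] at hcP
    simp only [Nat.cast_zero, sub_zero] at hcP
    rw [hcP] at hb
    simp at hb
  obtain ⟨j, hj⟩ : ∃ j, Nat.find hex = j + 1 := ⟨Nat.find hex - 1, by omega⟩
  refine ⟨j, by omega, fun i hi => ?_, by rw [← hj]; exact Nat.find_spec hex⟩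
  have := Nat.find_min hex (show i < Nat.find hex by omega)
  simpa using this

lemma exists_two_presinks (hn : 3 ≤ n) (a b : Fin n) (ha : σ a = true) (hb : σ b = false) :
    ∃ u v : Fin n, u ≠ v ∧ (∀ w, cycleArc n σ u w → IsSink (cycleArc n σ) w) ∧
      (∀ w, cycleArc n σ v w → IsSink (cycleArc n σ) w) := by
  have hn2 : 2 ≤ n := by omega
  have hone : (1 : Fin n) ≠ 0 := by
    intro h
    have := congrArg Fin.val h
    rw [Fin.val_one', Fin.val_zero, Nat.mod_eq_of_lt (show 1 < n by omega)] at this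
    omega
  -- first sink
  obtain ⟨j, hjw, hjf, hjt⟩ := find_sink hb (w := (b - a).val)
    (by rw [Fin.cast_val_eq_self]; simpa using ha)
  set s := b - ((j : ℕ) : Fin n) with hs
  have hs0 : σ s = false := hjf j le_rfl
  have hs1 : σ (s - 1) = true := by
    have : s - 1 = b - (((j + 1 : ℕ)) : Fin n) := by
      rw [hs]; push_cast; ring
    rw [this]; exact hjt
  have hsink : IsSink (cycleArc n σ) s := (sink_iff hn2 s).2 ⟨hs0, hs1⟩
  have hpre_s : ∀ w, cycleArc n σ s w → IsSink (cycleArc n σ) w :=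
    fun w hw => absurd hw (hsink w)
  by_cases h2 : σ (s - 2) = true
  · -- u = s - 1
    refine ⟨s, s - 1, ?_, hpre_s, ?_⟩
    · intro h
      have : (1 : Fin n) = 0 := by
        have := sub_eq_self.1 h.symm
        exact this
      exact hone this
    · intro w hw
      rcases (arc_iff hn2 _ _).1 hw with ⟨-, rfl⟩ | ⟨hf, he⟩
      · have : s - 1 + 1 = s := by ring
        rw [this]; exact hsink
      · have : w = s - 2 := by
          have : w = s - 1 - 1 := by rw [he]; ring
          rw [this]; ring
        rw [this, h2] at hf; simp at hf
  · have h2' : σ (s - 2) = false := by simpa using h2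
    by_cases h3 : σ (s + 1) = true
    · -- second sink via find_sink from s - 2
      have hw3 : σ (s - 2 - (((n - 3 : ℕ)) : Fin n)) = true := by
        have : s - 2 - (((n - 3 : ℕ)) : Fin n) = s + 1 := by
          rw [Nat.cast_sub (show 3 ≤ n from hn), Fin.natCast_self]
          push_cast
          ring
        rw [this]; exact h3
      obtain ⟨i, hiw, hif, hit⟩ := find_sink h2' hw3
      set p := s - 2 - ((i : ℕ) : Fin n) with hp
      have hp0 : σ p = false := hif i le_rfl
      have hp1 : σ (p - 1) = true := by
        have : p - 1 = s - 2 - (((i + 1 : ℕ)) : Fin n) := by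
          rw [hp]; push_cast; ring
        rw [this]; exact hit
      have hpsink : IsSink (cycleArc n σ) p := (sink_iff hn2 p).2 ⟨hp0, hp1⟩
      refine ⟨s, p, ?_, hpre_s, fun w hw => absurd hw (hpsink w)⟩
      intro hsp
      have : (((i + 2 : ℕ)) : Fin n) = 0 := by
        have h4 : s - (((i + 2 : ℕ)) : Fin n) = s := by
          have hps : s - 2 - ((i : ℕ) : Fin n) = s := by rw [← hp, ← hsp]
          calc s - (((i + 2 : ℕ)) : Fin n) = s - 2 - ((i : ℕ) : Fin n) := by push_cast; ring
          _ = s := hps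
        have := sub_eq_self.1 h4
        exact this
      rw [Fin.natCast_eq_zero] at this
      have := Nat.le_of_dvd (by omega) this
      omega
    · -- u = s + 1
      have h3' : σ (s + 1) = false := by simpa using h3
      refine ⟨s, s + 1, ?_, hpre_s, ?_⟩
      · intro h
        exact hone (by linear_combination h.symm)
      · intro w hw
        rcases (arc_iff hn2 _ _).1 hw with ⟨hf, -⟩ | ⟨-, he⟩
        · rw [h3'] at hf; simp at hf
        · have : w = s := by
            have := add_right_cancel (a := w) (b := 1) (c := s) he.symm
            exact this
          rw [this]; exact hsink

lemma shift_walk {c : Fin n} {A : Fin n → Fin n → Prop} (hA : ∀ u v, A u v ↔ v = u + c)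
    (m : ℕ) (u v : Fin n) : WalkLen A m u v ↔ v = u + (m : Fin n) * c := by
  induction m generalizing u with
  | zero => simp [WalkLen, eq_comm]
  | succ m ih =>
    calc WalkLen A (m + 1) u v ↔ ∃ w, A u w ∧ WalkLen A m w v := Iff.rfl
    _ ↔ v = u + c + (m : Fin n) * c := by simp [hA, ih]
    _ ↔ _ := by
        push_cast
        constructor <;> (intro h; rw [h]; ring)

lemma shift_weight {c : Fin n} {A : Fin n → Fin n → Prop} {k : ℕ}
    (hA : ∀ u v, A u v ↔ v = u + c)
    (hmul : ∀ m < k, (m : Fin n) * c ≠ (k : Fin n) * c)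
    (f : Fin n → ℕ) (u : Fin n) : dWeight A {k} f u = f (u + (k : Fin n) * c) := by
  have hIn : ∀ y, InDNbhd A {k} u y ↔ y = u + (k : Fin n) * c := by
    intro y
    constructor
    · rintro ⟨k', hk', h1, -⟩
      rw [Set.mem_singleton_iff] at hk'
      rw [hk'] at h1
      exact (shift_walk hA k u y).1 h1
    · rintro rfl
      refine ⟨k, rfl, (shift_walk hA k u _).2 rfl, fun m hm hw => ?_⟩
      have h1 := (shift_walk hA m u _).1 hw
      exact hmul m hm (add_left_cancel ((rfl : u + (m:Fin n)*c = u + (m:Fin n)*c) ▸ h1.symm))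
  unfold dWeight
  simp only [hIn]
  simp [Finset.sum_ite_eq']
end AntimagicAux

/-- For `n ≥ 3` and `2 ≤ k ≤ n-1`, an oriented cycle `C⃗_n` is
`{k}`-antimagic iff it is unidirectional. -/
theorem singleton_antimagic_iff_unidirectional (n k : ℕ) (hn : 3 ≤ n)
    (hk2 : 2 ≤ k) (hkn : k ≤ n - 1) (σ : Fin n → Bool) :
    DAntimagic (Fin n) (cycleArc n σ) {k} ↔ Unidirectional n σ := by
  haveI : NeZero n := ⟨by omega⟩
  have hn2 : 2 ≤ n := by omega
  have hkn' : k < n := by omega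
  constructor
  · intro hD
    by_contra hU
    rw [Unidirectional, not_or] at hU
    obtain ⟨h1, h2⟩ := hU
    push_neg at h1 h2
    obtain ⟨b, hb⟩ := h1
    obtain ⟨a, ha⟩ := h2
    obtain ⟨u, v, huv, hu, hv⟩ := exists_two_presinks hn a b
      (by simpa using ha) (by simpa using hb)
    obtain ⟨e, hinj⟩ := hD
    apply huv
    apply hinj
    show dWeight _ _ _ u = dWeight _ _ _ v
    rw [weight_zero _ hk2 u hu, weight_zero _ hk2 v hv]
  · intro hU
    have hcast : ∀ m, m < k → ((m : ℕ) : Fin n) ≠ ((k : ℕ) : Fin n) := by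
      intro m hm h
      have := congrArg Fin.val h
      rw [Fin.val_natCast, Fin.val_natCast, Nat.mod_eq_of_lt (by omega),
        Nat.mod_eq_of_lt hkn'] at this
      omega
    rcases hU with hT | hF
    · have hA : ∀ u v, cycleArc n σ u v ↔ v = u + 1 := by
        intro u v
        rw [arc_iff hn2]
        constructor
        · rintro (⟨-, h⟩ | ⟨h, -⟩)
          · exact h
          · rw [hT v] at h; simp at h
        · intro h; exact Or.inl ⟨hT u, h⟩
      have hmul : ∀ m < k, (m : Fin n) * 1 ≠ (k : Fin n) * 1 := by
        intro m hm
        simpa using hcast m hm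
      refine ⟨Fintype.equivFin (Fin n), ?_⟩
      intro u v h
      simp only at h
      rw [shift_weight hA hmul, shift_weight hA hmul] at h
      have h3 : ((Fintype.equivFin (Fin n)) (u + (k : Fin n) * 1) : ℕ)
          = ((Fintype.equivFin (Fin n)) (v + (k : Fin n) * 1) : ℕ) := by omega
      have h4 := (Fintype.equivFin (Fin n)).injective (Fin.val_injective h3)
      exact add_right_cancel h4
    · have hA : ∀ u v, cycleArc n σ u v ↔ v = u + (-1) := by
        intro u v
        rw [arc_iff hn2]
        constructor
        · rintro (⟨h, -⟩ | ⟨-, h⟩)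
          · rw [hF u] at h; simp at h
          · rw [h]; ring
        · intro h
          exact Or.inr ⟨hF v, by rw [h]; ring⟩
      have hmul : ∀ m < k, (m : Fin n) * (-1) ≠ (k : Fin n) * (-1) := by
        intro m hm heq
        simp only [mul_neg_one, neg_inj] at heq
        exact hcast m hm heq
      refine ⟨Fintype.equivFin (Fin n), ?_⟩
      intro u v h
      simp only at h
      rw [shift_weight hA hmul, shift_weight hA hmul] at h
      have h3 : ((Fintype.equivFin (Fin n)) (u + (k : Fin n) * (-1)) : ℕ)
          = ((Fintype.equivFin (Fin n)) (v + (k : Fin n) * (-1)) : ℕ) := by omega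
      have h4 := (Fintype.equivFin (Fin n)).injective (Fin.val_injective h3)
      exact add_right_cancel h4
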